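/- arXiv:2110.09993 — 3 statements merged into one kernel-verified Lean document; each statement's English description precedes it below -/
import Mathlib

section
/- For a real number λ ∈ (-1/3, 1), both roots γ of the quadratic γ² − 2λγ + λ = 0 (the characteristic polynomial of the Exact-Diffusion error matrix) have modulus strictly less than 1. -/
/-- For `λ ∈ (−1/3, 1)`, both complex roots of `γ² − 2λγ + λ = 0` have modulus `< 1`. -/
theorem stmt4 (l : ℝ) (h0 : -1/3 < l) (h1 : l < 1) (γ : ℂ)
    (h : γ ^ 2 - 2 * (l : ℂ) * γ + (l : ℂ) = 0) :
    ‖γ‖ < 1 := by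
  set x := γ.re with hx'
  set y := γ.im with hy'
  have hre : x ^ 2 - y ^ 2 - 2 * l * x + l = 0 := by
    have := congrArg Complex.re h
    simp [pow_two, Complex.mul_re, Complex.mul_im, ← hx', ← hy'] at this
    linarith
  have him : 2 * x * y - 2 * l * y = 0 := by
    have := congrArg Complex.im h
    simp [pow_two, Complex.mul_re, Complex.mul_im, ← hx', ← hy'] at this
    linarith
  have habs : ‖γ‖ ^ 2 = x ^ 2 + y ^ 2 := by
    rw [Complex.sq_norm, Complex.normSq_apply, pow_two, pow_two]
  have key : x ^ 2 + y ^ 2 < 1 := by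
    have hfac : y * (x - l) = 0 := by linear_combination him / 2
    rcases mul_eq_zero.mp hfac with hy | hxl
    · have hx2 : x ^ 2 - 2 * l * x + l = 0 := by nlinarith [hre, hy]
      have hlt1 : x < 1 := by nlinarith [sq_nonneg (x - l), sq_nonneg (x + 1 - 2 * l)]
      have hgt1 : -1 < x := by nlinarith [sq_nonneg (x - l), sq_nonneg (x - 1 - 2 * l)]
      nlinarith [hy]
    · have hx : x = l := by linarith
      have hy2 : y ^ 2 = l - l ^ 2 := by nlinarith [hre, hx]
      nlinarith
  nlinarith [norm_nonneg γ, habs, key]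
end

section
/- Let f : ℝ^d → ℝ be L-smooth and satisfy the Polyak–Łojasiewicz condition 2μ(f(x) − f⋆) ≤ ‖∇f(x)‖² for all x, with 0 < μ ≤ L. Then for any x and any g ∈ ℝ^d and step size α > 0, the point x⁺ = x − αg satisfies f(x⁺) − f⋆ ≤ (1 − αμ)(f(x) − f⋆) + (α/2)‖g − ∇f(x)‖² + (α/2)(αL − 1)‖g‖², provided α ≤ 1/L. -/
open InnerProductSpace intervalIntegral
open scoped RealInnerProductSpace

lemma descent_lemma {d : ℕ} (f : EuclideanSpace ℝ (Fin d) → ℝ)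
    (g : EuclideanSpace ℝ (Fin d) → EuclideanSpace ℝ (Fin d)) (L : ℝ) (hL : 0 < L)
    (hgrad : ∀ x, HasGradientAt f (g x) x)
    (hlip : ∀ x y, ‖g x - g y‖ ≤ L * ‖x - y‖)
    (x y : EuclideanSpace ℝ (Fin d)) :
    f y ≤ f x + ⟪g x, y - x⟫ + L / 2 * ‖y - x‖ ^ 2 := by
  set v := y - x with hv
  have hgc : Continuous g := by
    refine (LipschitzWith.of_dist_le_mul (K := L.toNNReal) fun a b => ?_).continuous
    rw [dist_eq_norm, dist_eq_norm, Real.coe_toNNReal _ hL.le]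
    exact hlip a b
  have hφ : ∀ t : ℝ, HasDerivAt (fun t : ℝ => f (x + t • v)) ⟪g (x + t • v), v⟫ t := by
    intro t
    have h1 : HasDerivAt (fun t : ℝ => x + t • v) v t := by
      simpa using ((hasDerivAt_id t).smul_const v).const_add x
    have h2 := ((hgrad (x + t • v)).hasFDerivAt).comp_hasDerivAt t h1
    simp [toDual_apply_apply, real_inner_comm] at h2
    rw [real_inner_comm]
    exact h2
  have hcont : Continuous fun t : ℝ => ⟪g (x + t • v), v⟫ :=
    (hgc.comp (continuous_const.add (continuous_id.smul continuous_const))).inner continuous_const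
  have hFTC : f (x + (1:ℝ) • v) - f (x + (0:ℝ) • v)
      = ∫ t in (0:ℝ)..1, ⟪g (x + t • v), v⟫ := by
    exact (intervalIntegral.integral_eq_sub_of_hasDerivAt
      (fun t _ => hφ t) (hcont.intervalIntegrable 0 1)).symm
  have hkey : f y - f x - ⟪g x, v⟫ = ∫ t in (0:ℝ)..1, ⟪g (x + t • v) - g x, v⟫ := by
    have : ∫ t in (0:ℝ)..1, ⟪g (x + t • v) - g x, v⟫
        = (∫ t in (0:ℝ)..1, ⟪g (x + t • v), v⟫) - ∫ t in (0:ℝ)..1, ⟪g x, v⟫ := by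
      rw [← intervalIntegral.integral_sub (hcont.intervalIntegrable 0 1)
        (intervalIntegrable_const)]
      simp [inner_sub_left]
    rw [this, ← hFTC]
    simp [hv]
  have hbound : (∫ t in (0:ℝ)..1, ⟪g (x + t • v) - g x, v⟫)
      ≤ ∫ t in (0:ℝ)..1, L * t * ‖v‖ ^ 2 := by
    refine intervalIntegral.integral_mono_on (by norm_num)
      (Continuous.intervalIntegrable ?_ 0 1)
      (((continuous_const.mul continuous_id).mul continuous_const :
        Continuous fun t : ℝ => L * t * ‖v‖ ^ 2).intervalIntegrable 0 1)
      fun t ht => ?_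
    · exact Continuous.inner
        ((hgc.comp (continuous_const.add (continuous_id.smul continuous_const))).sub
          continuous_const) continuous_const
    calc ⟪g (x + t • v) - g x, v⟫ ≤ ‖g (x + t • v) - g x‖ * ‖v‖ :=
          real_inner_le_norm _ _
      _ ≤ (L * ‖(x + t • v) - x‖) * ‖v‖ := by
          gcongr; exact hlip _ _
      _ = L * (|t| * ‖v‖) * ‖v‖ := by rw [add_sub_cancel_left, norm_smul]; norm_num
      _ = L * t * ‖v‖ ^ 2 := by rw [abs_of_nonneg ht.1]; ring
  have hint : (∫ t in (0:ℝ)..1, L * t * ‖v‖ ^ 2) = L / 2 * ‖v‖ ^ 2 := by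
    have : (fun t : ℝ => L * t * ‖v‖ ^ 2) = fun t : ℝ => (L * ‖v‖ ^ 2) * t := by
      ext t; ring
    rw [this, intervalIntegral.integral_const_mul, integral_id]
    norm_num; ring
  nlinarith [hkey ▸ (hbound.trans_eq hint)]

/-- One-step inexact gradient descent under the PL condition: if `f` is `L`-smooth,
bounded below with infimum `fstar`, satisfies `2μ(f(x) − fstar) ≤ ‖∇f(x)‖²` with
`0 < μ ≤ L`, and `0 < α ≤ 1/L`, then for `x⁺ = x − α g'`:
`f(x⁺) − fstar ≤ (1 − αμ)(f(x) − fstar) + (α/2)‖g' − g(x)‖² + (α/2)(αL − 1)‖g'‖²`. -/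
theorem stmt11 {d : ℕ} (f : EuclideanSpace ℝ (Fin d) → ℝ)
    (g : EuclideanSpace ℝ (Fin d) → EuclideanSpace ℝ (Fin d))
    (L μ fstar : ℝ) (hL : 0 < L) (hμ : 0 < μ) (hμL : μ ≤ L)
    (hgrad : ∀ x, HasGradientAt f (g x) x)
    (hlip : ∀ x y, ‖g x - g y‖ ≤ L * ‖x - y‖)
    (hbound : ∀ x, fstar ≤ f x)
    (hPL : ∀ x, 2 * μ * (f x - fstar) ≤ ‖g x‖ ^ 2)
    (x g' : EuclideanSpace ℝ (Fin d)) (α : ℝ) (hα0 : 0 < α) (hα : α ≤ 1 / L) :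
    f (x - α • g') - fstar
      ≤ (1 - α * μ) * (f x - fstar) + (α / 2) * ‖g' - g x‖ ^ 2
        + (α / 2) * (α * L - 1) * ‖g'‖ ^ 2 := by
  have hd := descent_lemma f g L hL hgrad hlip x (x - α • g')
  have h1 : x - α • g' - x = -(α • g') := by abel
  rw [h1] at hd
  have h2 : ⟪g x, -(α • g')⟫ = -α * ⟪g x, g'⟫ := by
    rw [inner_neg_right, real_inner_smul_right]; ring
  have h3 : ‖-(α • g')‖ ^ 2 = α ^ 2 * ‖g'‖ ^ 2 := by
    rw [norm_neg, norm_smul, Real.norm_eq_abs, abs_of_nonneg hα0.le]; ring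
  rw [h2, h3] at hd
  have hpar : ‖g' - g x‖ ^ 2 = ‖g'‖ ^ 2 - 2 * ⟪g x, g'⟫ + ‖g x‖ ^ 2 := by
    rw [norm_sub_sq_real, real_inner_comm g' (g x)]
  have hpl := hPL x
  nlinarith [hd, hpar, hpl]
end

section
/- Let H = [[1 − μα, αL], [αμλ²/2, (1+γ)/2]] with constants μ, L, λ, γ, α satisfying 0 < μ ≤ L, 0 ≤ λ ≤ 1, 0 ≤ γ < 1, and 0 < α ≤ (1−γ)/(2L+μ). Then the maximum absolute column sum norm satisfies ‖H‖₁ ≤ 1 − μα/2. -/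
/-- With `H = [[1−μα, αL], [αμλ²/2, (1+γ)/2]]`, `0 < μ ≤ L`, `0 ≤ λ ≤ 1`, `0 ≤ γ < 1`,
`0 < α ≤ (1−γ)/(2L+μ)`, the max absolute column sum norm satisfies `‖H‖₁ ≤ 1 − μα/2`. -/
theorem stmt13 (μ L l γ α : ℝ) (hμ : 0 < μ) (hμL : μ ≤ L) (hl0 : 0 ≤ l) (hl1 : l ≤ 1)
    (hγ0 : 0 ≤ γ) (hγ1 : γ < 1) (hα0 : 0 < α) (hα : α ≤ (1 - γ) / (2 * L + μ)) :
    ∀ j, ∑ i, |(!![1 - μ * α, α * L; α * μ * l ^ 2 / 2, (1 + γ) / 2] :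
        Matrix (Fin 2) (Fin 2) ℝ) i j| ≤ 1 - μ * α / 2 := by
  have hpos : 0 < 2 * L + μ := by linarith
  have key : α * (2 * L + μ) ≤ 1 - γ := by
    rw [div_eq_inv_mul] at hα
    calc α * (2 * L + μ) ≤ (2 * L + μ)⁻¹ * (1 - γ) * (2 * L + μ) := by
          exact mul_le_mul_of_nonneg_right hα hpos.le
      _ = 1 - γ := by field_simp
  intro j
  fin_cases j <;> simp [Fin.sum_univ_two]
  · have h1 : 0 ≤ 1 - μ * α := by nlinarith
    have h2 : (0:ℝ) ≤ α * μ * l ^ 2 / 2 := by positivity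
    rw [abs_of_nonneg h1, abs_of_nonneg h2]
    have hl2 : l ^ 2 ≤ 1 := by nlinarith
    nlinarith [mul_pos hα0 hμ, hl2]
  · have h1 : 0 ≤ α * L := by nlinarith
    have h2 : (0:ℝ) ≤ (1 + γ) / 2 := by linarith
    rw [← abs_mul, abs_of_nonneg h1, abs_of_nonneg h2]
    linarith
end
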